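/- Let N ≥ 1 be an integer and define f_N : ℝ → ℝ by f_N(x) = ∫_{[−2,2]^N} ∏_{1≤i<j≤N}(t_i − t_j)² · ∏_{j=1}^{N}(x − t_j) dt₁⋯dt_N. Then f_N is a polynomial function of x and satisfies, for every x ∈ ℝ, (4 − x²)·f_N″(x) − 2x·f_N′(x) + N(N+1)·f_N(x) = 0. Equivalently, with ℏ = 1/N, the function f_N satisfies the quantum curve equation (4 − x²)ℏ²·f_N″ − 2xℏ²·f_N′ + (1 + ℏ)·f_N = 0. (This is the content of the paper's quantum curve theorem for the wave function of the Θ-Gromov–Witten invariants of P¹ at ℏ = 1/N.) -/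

import Mathlib

/-!
Write `V` for the squared Vandermonde determinant and `P_t = ∏ j, (X - t j)`. The function `F` is
the polynomial whose coefficients are the integrals of the coefficients of `V t • P_t`, and every
linear operator on polynomials commutes with this integration. For the Legendre operator
`L = (4 - x²) ∂² - 2x ∂ + N(N+1)`, the partial fraction expansions `P_t' / P_t = ∑ 1 / (x - t j)`
and `∂_{t j} V / V = ∑_{k ≠ j} 2 / (t j - t k)` turn `V t · (L P_t)(x)`, for generic `t`, into the
divergence `∑ j, ∂_{t j} [(4 - t j ²) · V t · ∏_{k ≠ j} (x - t k)]`. These fluxes vanish on the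
faces `t j = ±2` of the cube, so by the divergence theorem the integral of `V t · (L P_t)(x)` is
zero.
-/

open MeasureTheory Finset Polynomial Function

section ParametricPolynomial

variable {α : Type*} [MeasurableSpace α] {μ : Measure α}

theorem Polynomial.eval_linearMap_eq_sum_range {d : ℕ} (L : ℝ[X] →ₗ[ℝ] ℝ[X]) {r : ℝ[X]}
    (hr : r.natDegree ≤ d) (x : ℝ) :
    (L r).eval x = ∑ k ∈ range (d + 1), r.coeff k * (L (X ^ k)).eval x := by
  conv_lhs => rw [r.as_sum_range' (d + 1) (Nat.lt_succ_of_le hr)]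
  simp [← C_mul_X_pow_eq_monomial, ← smul_eq_C_mul, eval_finsetSum]

theorem exists_eval_linearMap_eq_integral {q : α → ℝ[X]} {d : ℕ}
    (hdeg : ∀ t, (q t).natDegree ≤ d) (hint : ∀ k, Integrable (fun t => (q t).coeff k) μ) :
    ∃ p : ℝ[X], ∀ (L : ℝ[X] →ₗ[ℝ] ℝ[X]) (x : ℝ), (L p).eval x = ∫ t, (L (q t)).eval x ∂μ := by
  set p := ∑ k ∈ range (d + 1), monomial k (∫ t, (q t).coeff k ∂μ)
  have hp : p.natDegree ≤ d :=
    natDegree_sum_le_of_forall_le _ _ fun k hk =>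
      (natDegree_monomial_le _).trans (Nat.lt_succ_iff.1 (mem_range.1 hk))
  have hcoeff : ∀ k ∈ range (d + 1), p.coeff k = ∫ t, (q t).coeff k ∂μ := by
    intro k hk
    simp [p, coeff_monomial, hk]
  refine ⟨p, fun L x => ?_⟩
  calc (L p).eval x = ∑ k ∈ range (d + 1), (∫ t, (q t).coeff k ∂μ) * (L (X ^ k)).eval x := by
        rw [eval_linearMap_eq_sum_range L hp]
        exact Finset.sum_congr rfl fun k hk => by rw [hcoeff k hk]
    _ = ∫ t, ∑ k ∈ range (d + 1), (q t).coeff k * (L (X ^ k)).eval x ∂μ := by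
        rw [integral_finsetSum _ fun k _ => (hint k).mul_const _]
        simp_rw [integral_mul_const]
    _ = ∫ t, (L (q t)).eval x ∂μ := by
        simp_rw [eval_linearMap_eq_sum_range L (hdeg _)]

theorem Polynomial.continuous_coeff_prod {ι T : Type*} [TopologicalSpace T] {s : Finset ι}
    {f : ι → T → ℝ[X]} (hf : ∀ i ∈ s, ∀ k, Continuous fun t => (f i t).coeff k) (k : ℕ) :
    Continuous fun t => (∏ i ∈ s, f i t).coeff k := by
  classical
  induction s using Finset.induction_on generalizing k with
  | empty => simp only [prod_empty]; exact continuous_const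
  | insert a s ha ih =>
    simp only [prod_insert ha, coeff_mul]
    exact continuous_finsetSum _ fun n _ =>
      (hf a (mem_insert_self a s) _).mul (ih (fun i hi => hf i (mem_insert_of_mem hi)) _)

theorem Polynomial.continuous_coeff_prod_X_sub_C {ι : Type*} (s : Finset ι) (k : ℕ) :
    Continuous fun t : ι → ℝ => (∏ i ∈ s, (X - C (t i))).coeff k := by
  refine continuous_coeff_prod (fun i _ n => ?_) k
  simp only [coeff_sub, coeff_X, coeff_C]
  split_ifs <;> fun_prop

end ParametricPolynomial

section ProductDerivatives

variable {ι : Type*} [DecidableEq ι] {s : Finset ι}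

theorem HasDerivAt.fun_finsetProd_mul_sum {f : ι → ℝ → ℝ} {L : ι → ℝ} {x : ℝ}
    (hf : ∀ i ∈ s, HasDerivAt (f i) (f i x * L i) x) :
    HasDerivAt (fun y => ∏ i ∈ s, f i y) ((∏ i ∈ s, f i x) * ∑ i ∈ s, L i) x := by
  refine (HasDerivAt.fun_finsetProd hf).congr_deriv ?_
  rw [Finset.mul_sum]
  refine Finset.sum_congr rfl fun i hi => ?_
  rw [smul_eq_mul, ← mul_assoc, Finset.prod_erase_mul s _ hi]

theorem hasDerivAt_prod_sub (c : ι → ℝ) {x : ℝ} (hx : ∀ i ∈ s, c i ≠ x) :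
    HasDerivAt (fun y => ∏ i ∈ s, (y - c i)) ((∏ i ∈ s, (x - c i)) * ∑ i ∈ s, (x - c i)⁻¹) x :=
  HasDerivAt.fun_finsetProd_mul_sum fun i hi =>
    ((hasDerivAt_id x).sub_const (c i)).congr_deriv
      (mul_inv_cancel₀ (sub_ne_zero.2 (hx i hi).symm)).symm

theorem Polynomial.eval_derivative_prod_X_sub_C (c : ι → ℝ) (x : ℝ) :
    (derivative (∏ i ∈ s, (X - C (c i)))).eval x = ∑ i ∈ s, ∏ k ∈ s.erase i, (x - c k) := by
  refine ((∏ i ∈ s, (X - C (c i))).hasDerivAt x).unique ?_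
  simp only [eval_prod, eval_sub, eval_X, eval_C]
  exact (HasDerivAt.fun_finsetProd fun i _ => (hasDerivAt_id x).sub_const (c i)).congr_deriv
    (by simp)

theorem Polynomial.eval_derivative_prod_X_sub_C_of_ne (c : ι → ℝ) {x : ℝ}
    (hx : ∀ i ∈ s, c i ≠ x) :
    (derivative (∏ i ∈ s, (X - C (c i)))).eval x
      = (∏ i ∈ s, (x - c i)) * ∑ i ∈ s, (x - c i)⁻¹ := by
  refine ((∏ i ∈ s, (X - C (c i))).hasDerivAt x).unique ?_
  simpa only [eval_prod, eval_sub, eval_X, eval_C] using hasDerivAt_prod_sub c hx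

theorem Polynomial.eval_derivative_derivative_prod_X_sub_C (c : ι → ℝ) {x : ℝ}
    (hx : ∀ i ∈ s, c i ≠ x) :
    (derivative (derivative (∏ i ∈ s, (X - C (c i))))).eval x
      = (∏ i ∈ s, (x - c i)) * ∑ i ∈ s, (x - c i)⁻¹ * ∑ k ∈ s.erase i, (x - c k)⁻¹ := by
  refine ((derivative (∏ i ∈ s, (X - C (c i)))).hasDerivAt x).unique ?_
  simp only [eval_derivative_prod_X_sub_C]
  refine (HasDerivAt.fun_sum fun i _ => hasDerivAt_prod_sub c fun k hk =>
    hx k (mem_of_mem_erase hk)).congr_deriv ?_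
  rw [Finset.mul_sum]
  refine Finset.sum_congr rfl fun i hi => ?_
  have hxi : x - c i ≠ 0 := sub_ne_zero.2 (hx i hi).symm
  rw [← Finset.mul_prod_erase s (fun k => x - c k) hi]
  field_simp

end ProductDerivatives

theorem HasFDerivAt.hasDerivAt_update {ι : Type*} [Fintype ι] [DecidableEq ι]
    {g : (ι → ℝ) → ℝ} {g' : (ι → ℝ) →L[ℝ] ℝ} {t : ι → ℝ} (hg : HasFDerivAt g g' t) (j : ι) :
    HasDerivAt (fun s => g (update t j s)) (g' (Pi.single j 1)) (t j) := by
  rw [← update_eq_self j t] at hg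
  exact hg.comp_hasDerivAt (t j) (_root_.hasDerivAt_update t j (t j))

noncomputable def legendreOperator (c : ℝ) : ℝ[X] →ₗ[ℝ] ℝ[X] :=
  LinearMap.mulLeft ℝ (4 - X ^ 2) ∘ₗ derivative ∘ₗ derivative
    - LinearMap.mulLeft ℝ (2 * X) ∘ₗ derivative + c • LinearMap.id

theorem eval_legendreOperator (c : ℝ) (p : ℝ[X]) (x : ℝ) :
    (legendreOperator c p).eval x
      = (4 - x ^ 2) * (derivative (derivative p)).eval x - 2 * x * (derivative p).eval x
        + c * p.eval x := by
  simp [legendreOperator, mul_assoc]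

/-- The sum over `k` includes `k = j`, whose term is `0⁻¹ = 0`. -/
theorem sum_inv_sub_mul_legendre {ι : Type*} [Fintype ι] [DecidableEq ι] {t : ι → ℝ}
    (ht : Injective t) {x : ℝ} (hx : ∀ i, t i ≠ x) :
    ∑ j, (x - t j)⁻¹ * (-2 * t j + (4 - t j ^ 2) * (2 * ∑ k, (t j - t k)⁻¹))
      = (4 - x ^ 2) * ∑ j, (x - t j)⁻¹ * ∑ k ∈ univ.erase j, (x - t k)⁻¹
        - 2 * x * ∑ j, (x - t j)⁻¹ + Fintype.card ι * (Fintype.card ι + 1) := by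
  have hx' : ∀ i, x - t i ≠ 0 := fun i => sub_ne_zero.2 (hx i).symm
  set a : ι → ι → ℝ := fun j k => (x - t j)⁻¹ * (4 - t j ^ 2) * (t j - t k)⁻¹
  have hlin : ∀ j, (x - t j)⁻¹ * (-2 * t j) = 2 - 2 * x * (x - t j)⁻¹ := fun j => by
    field_simp [hx' j]
    ring
  have hpair : ∀ j, ∀ k ∈ univ.erase j,
      a j k + a k j = (4 - x ^ 2) * ((x - t j)⁻¹ * (x - t k)⁻¹) + 1 := by
    intro j k hk
    have hjk : t j - t k ≠ 0 := sub_ne_zero.2 (ht.ne (ne_of_mem_erase hk).symm)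
    have hkj : t k - t j ≠ 0 := sub_ne_zero.2 (ht.ne (ne_of_mem_erase hk))
    simp only [a]
    field_simp [hx' j, hx' k]
    ring
  have hcount : ∑ j : ι, ∑ k ∈ univ.erase j, (1 : ℝ)
      = Fintype.card ι * (Fintype.card ι - 1) := by
    simp only [Finset.sum_const, nsmul_eq_mul, mul_one,
      Finset.cast_card_erase_of_mem (mem_univ _), Finset.card_univ]
  have hquad : 2 * ∑ j, ∑ k, a j k
      = (4 - x ^ 2) * ∑ j, (x - t j)⁻¹ * ∑ k ∈ univ.erase j, (x - t k)⁻¹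
        + Fintype.card ι * (Fintype.card ι - 1) := by
    calc 2 * ∑ j, ∑ k, a j k = ∑ j, ∑ k, (a j k + a k j) := by
          rw [two_mul]; nth_rw 2 [Finset.sum_comm]; simp only [Finset.sum_add_distrib]
      _ = ∑ j, ∑ k ∈ univ.erase j, (a j k + a k j) :=
          Finset.sum_congr rfl fun j _ => (Finset.sum_erase _ (by simp [a])).symm
      _ = _ := by
          rw [Finset.sum_congr rfl fun j _ => Finset.sum_congr rfl (hpair j), ← hcount]
          simp only [Finset.sum_add_distrib, Finset.mul_sum]
  calc _ = ∑ j, (2 - 2 * x * (x - t j)⁻¹) + 2 * ∑ j, ∑ k, a j k := by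
        simp only [a, mul_add, hlin, Finset.sum_add_distrib, Finset.mul_sum]
        congr 1
        exact Finset.sum_congr rfl fun j _ => Finset.sum_congr rfl fun k _ => by ring
    _ = _ := by
        rw [hquad, Finset.sum_sub_distrib, ← Finset.mul_sum]
        simp only [Finset.sum_const, Finset.card_univ, nsmul_eq_mul]
        ring

section Vandermonde

variable {ι : Type*} [Fintype ι] [LinearOrder ι] [LocallyFiniteOrderTop ι]

theorem Finset.sum_sum_Ioi_add_sum_sum_Ioi {M : Type*} [AddCommMonoid M] {h : ι → ι → M}
    (hsymm : ∀ i k, h i k = h k i) (hdiag : ∀ i, h i i = 0) :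
    ∑ i, ∑ k ∈ Ioi i, h i k + ∑ i, ∑ k ∈ Ioi i, h i k = ∑ i, ∑ k, h i k := by
  have hsplit : ∀ i k, h i k = (if i < k then h i k else 0) + (if k < i then h k i else 0) := by
    intro i k
    rcases lt_trichotomy i k with hik | rfl | hki
    · simp [hik, hik.not_gt]
    · simp [hdiag]
    · simp [hki, hki.not_gt, hsymm i k]
  conv_rhs => rw [Finset.sum_congr rfl fun i _ => Finset.sum_congr rfl fun k _ => hsplit i k]
  simp only [Finset.sum_add_distrib]
  rw [Finset.sum_comm (f := fun i k => if k < i then h k i else 0)]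
  simp [Finset.sum_ite, Finset.filter_lt_eq_Ioi]

def vandermondeSq (t : ι → ℝ) : ℝ := ∏ i, ∏ k ∈ Ioi i, (t i - t k) ^ 2

theorem continuous_vandermondeSq : Continuous (vandermondeSq (ι := ι)) := by
  unfold vandermondeSq
  fun_prop

theorem hasDerivAt_vandermondeSq_update [DecidableEq ι] {t : ι → ℝ} (ht : Injective t)
    (j : ι) :
    HasDerivAt (fun s => vandermondeSq (update t j s))
      (vandermondeSq t * (2 * ∑ k, (t j - t k)⁻¹)) (t j) := by
  set h : ι → ι → ℝ := fun i k =>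
    ((Pi.single j 1 : ι → ℝ) i - (Pi.single j 1 : ι → ℝ) k) / (t i - t k)
  have hfactor : ∀ i, ∀ k ∈ Ioi i, HasDerivAt (fun s => (update t j s i - update t j s k) ^ 2)
      ((t i - t k) ^ 2 * (2 * h i k)) (t j) := by
    intro i k hk
    have hne : t i - t k ≠ 0 := sub_ne_zero.2 (ht.ne (mem_Ioi.1 hk).ne)
    have hupd := hasDerivAt_pi.1 (hasDerivAt_update t j (t j))
    refine ((hupd i).sub (hupd k)).pow 2 |>.congr_deriv ?_
    simp only [update_eq_self, Pi.sub_apply, h]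
    field_simp
    ring
  have hsum : ∑ i, ∑ k ∈ Ioi i, 2 * h i k = 2 * ∑ k, (t j - t k)⁻¹ := by
    have hsymm : ∀ i k, h i k = h k i := fun i k => by
      simp only [h]; rw [← neg_sub, ← neg_sub (t k), neg_div_neg_eq]
    simp_rw [← Finset.mul_sum, two_mul, Finset.sum_sum_Ioi_add_sum_sum_Ioi hsymm (by simp [h])]
    simp only [h, sub_div, Finset.sum_sub_distrib, Pi.single_apply, ite_div, one_div, zero_div]
    rw [Finset.sum_comm]
    simp only [Finset.sum_ite_eq', Finset.mem_univ, if_true]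
    simp_rw [← neg_sub (t j), inv_neg, Finset.sum_neg_distrib, sub_neg_eq_add]
  have := HasDerivAt.fun_finsetProd_mul_sum (s := univ) (x := t j) fun i _ =>
    HasDerivAt.fun_finsetProd_mul_sum (f := fun k s => (update t j s i - update t j s k) ^ 2)
      (L := fun k => 2 * h i k) fun k hk => by simpa only [update_eq_self] using hfactor i k hk
  simpa only [vandermondeSq, update_eq_self, hsum] using this

theorem exists_eval_linearMap_eq_setIntegral_vandermondeSq (a b : ι → ℝ) :
    ∃ p : ℝ[X], ∀ (L : ℝ[X] →ₗ[ℝ] ℝ[X]) (x : ℝ),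
      (L p).eval x = ∫ t in Set.Icc a b, vandermondeSq t * (L (∏ i, (X - C (t i)))).eval x := by
  obtain ⟨p, hp⟩ := exists_eval_linearMap_eq_integral (μ := volume.restrict (Set.Icc a b))
    (q := fun t => vandermondeSq t • ∏ i, (X - C (t i))) (d := Fintype.card ι)
    (fun t => (natDegree_smul_le _ _).trans (by simp))
    (fun k => by
      simp only [coeff_smul, smul_eq_mul]
      exact (continuous_vandermondeSq.mul
        (continuous_coeff_prod_X_sub_C univ k)).integrableOn_Icc)
  exact ⟨p, fun L x => by simp [hp]⟩

end Vandermonde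

section LegendreFlux

variable {ι : Type*} [Fintype ι] [LinearOrder ι] [LocallyFiniteOrderTop ι] [DecidableEq ι]

noncomputable def legendreFlux (x : ℝ) (j : ι) (t : ι → ℝ) : ℝ :=
  (4 - t j ^ 2) * vandermondeSq t * ∏ k ∈ univ.erase j, (x - t k)

theorem legendreFlux_eq_zero_of_sq_eq_four {x : ℝ} {j : ι} {t : ι → ℝ} (h : t j ^ 2 = 4) :
    legendreFlux x j t = 0 := by
  simp [legendreFlux, h]

theorem contDiff_legendreFlux (x : ℝ) (j : ι) : ContDiff ℝ 1 (legendreFlux x j) := by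
  unfold legendreFlux vandermondeSq
  fun_prop

theorem fderiv_legendreFlux_apply_single {t : ι → ℝ} (ht : Injective t) (x : ℝ) (j : ι) :
    fderiv ℝ (legendreFlux x j) t (Pi.single j 1)
      = vandermondeSq t * (∏ k ∈ univ.erase j, (x - t k))
        * (-2 * t j + (4 - t j ^ 2) * (2 * ∑ k, (t j - t k)⁻¹)) := by
  have hslice : (fun s => legendreFlux x j (update t j s))
      = fun s => (4 - s ^ 2) * vandermondeSq (update t j s) * ∏ k ∈ univ.erase j, (x - t k) := by
    funext s
    simp only [legendreFlux, update_self]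
    congr 1
    exact Finset.prod_congr rfl fun k hk => by rw [update_of_ne (ne_of_mem_erase hk)]
  have h4 : HasDerivAt (fun s : ℝ => 4 - s ^ 2) (-2 * t j) (t j) := by
    simpa using (hasDerivAt_pow 2 (t j)).const_sub 4
  refine (((contDiff_legendreFlux x j).differentiable one_ne_zero t).hasFDerivAt.hasDerivAt_update
    j).unique ?_
  rw [hslice]
  refine ((h4.mul (hasDerivAt_vandermondeSq_update ht j)).mul_const _).congr_deriv ?_
  rw [update_eq_self]
  ring

theorem sum_fderiv_legendreFlux_apply_single {t : ι → ℝ} (ht : Injective t) {x : ℝ}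
    (hx : ∀ i, t i ≠ x) :
    ∑ j, fderiv ℝ (legendreFlux x j) t (Pi.single j 1)
      = vandermondeSq t * (legendreOperator (Fintype.card ι * (Fintype.card ι + 1))
          (∏ i, (X - C (t i)))).eval x := by
  have herase : ∀ j, ∏ k ∈ univ.erase j, (x - t k) = (∏ k, (x - t k)) * (x - t j)⁻¹ := by
    intro j
    rw [← Finset.mul_prod_erase univ (fun k => x - t k) (mem_univ j)]
    field_simp [sub_ne_zero.2 (hx j).symm]
  simp only [fderiv_legendreFlux_apply_single ht, herase, eval_legendreOperator,
    eval_derivative_derivative_prod_X_sub_C t fun i _ => hx i,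
    eval_derivative_prod_X_sub_C_of_ne t fun i _ => hx i, eval_prod, eval_sub, eval_X, eval_C]
  calc _ = vandermondeSq t * (∏ k, (x - t k)) * ∑ j, (x - t j)⁻¹
          * (-2 * t j + (4 - t j ^ 2) * (2 * ∑ k, (t j - t k)⁻¹)) := by
        rw [Finset.mul_sum]
        exact Finset.sum_congr rfl fun j _ => by ring
    _ = _ := by
        rw [sum_inv_sub_mul_legendre ht hx]
        ring

end LegendreFlux

theorem integral_Icc_sum_fderiv_eq_zero {N : ℕ} {a b : Fin N → ℝ} (hle : a ≤ b)
    {g : Fin N → (Fin N → ℝ) → ℝ} (hg : ∀ i, ContDiff ℝ 1 (g i))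
    (ha : ∀ i t, t i = a i → g i t = 0) (hb : ∀ i t, t i = b i → g i t = 0) :
    ∫ t in Set.Icc a b, ∑ i, fderiv ℝ (g i) t (Pi.single i 1) = 0 := by
  cases N with
  | zero => simp
  | succ n =>
    rw [integral_divergence_of_hasFDerivAt_off_countable' a b hle g (fun i t => fderiv ℝ (g i) t)
      ∅ Set.countable_empty (fun i => (hg i).continuous.continuousOn)
      (fun t _ i => ((hg i).differentiable one_ne_zero t).hasFDerivAt)
      (Continuous.integrableOn_Icc (continuous_finsetSum _ fun i _ =>
        ((hg i).continuous_fderiv one_ne_zero).clm_apply continuous_const))]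
    refine Finset.sum_eq_zero fun i _ => ?_
    simp [ha i, hb i]

theorem ae_apply_ne_apply {ι : Type*} [Fintype ι] {i k : ι} (hik : i ≠ k) :
    ∀ᵐ t : ι → ℝ, t i ≠ t k := by
  classical
  set φ : (ι → ℝ) →ₗ[ℝ] ℝ :=
    LinearMap.proj (R := ℝ) (φ := fun _ : ι => ℝ) i - LinearMap.proj k
  have hφ : LinearMap.ker φ ≠ ⊤ := fun h => by
    have : Pi.single i 1 ∈ LinearMap.ker φ := h ▸ Submodule.mem_top
    simp [φ, hik] at this
  filter_upwards [measure_eq_zero_iff_ae_notMem.1 (Measure.addHaar_submodule volume _ hφ)]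
    with t ht
  simpa [φ, sub_eq_zero] using ht

theorem ae_injective {ι : Type*} [Fintype ι] : ∀ᵐ t : ι → ℝ, Injective t := by
  have : ∀ᵐ t : ι → ℝ, ∀ i k, i ≠ k → t i ≠ t k := by
    simp only [ae_all_iff]
    exact fun i k hik => ae_apply_ne_apply hik
  filter_upwards [this] with t ht i k h
  by_contra hik
  exact ht i k hik h

theorem legendre_ensemble_quantum_curve_general (N : ℕ) (F : ℝ → ℝ)
    (hF : ∀ x : ℝ, F x =
      ∫ t in (Set.univ.pi (fun _ => Set.Icc (-2 : ℝ) 2) : Set (Fin N → ℝ)),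
        (∏ i : Fin N, ∏ j ∈ Finset.Ioi i, (t i - t j) ^ 2) * ∏ j : Fin N, (x - t j)) :
    (∃ p : Polynomial ℝ, ∀ x : ℝ, F x = p.eval x) ∧
    ∀ x : ℝ,
      (4 - x ^ 2) * deriv (deriv F) x - 2 * x * deriv F x + (N : ℝ) * ((N : ℝ) + 1) * F x
        = 0 := by
  rw [Set.pi_univ_Icc] at hF
  obtain ⟨p, hp⟩ :=
    exists_eval_linearMap_eq_setIntegral_vandermondeSq (ι := Fin N) (fun _ => -2) (fun _ => 2)
  have hFp : F = fun x => p.eval x := funext fun x => by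
    simpa [hF, vandermondeSq, eval_prod] using (hp LinearMap.id x).symm
  have hderiv : ∀ r : ℝ[X], deriv (fun x => r.eval x) = fun x => (derivative r).eval x :=
    fun r => funext fun x => r.deriv
  refine ⟨⟨p, congrFun hFp⟩, fun x => ?_⟩
  calc (4 - x ^ 2) * deriv (deriv F) x - 2 * x * deriv F x + (N : ℝ) * ((N : ℝ) + 1) * F x
      = (legendreOperator (N * (N + 1)) p).eval x := by
        simp only [hFp, hderiv, eval_legendreOperator]
    _ = ∫ t in Set.Icc (fun _ => -2) (fun _ => 2),
          ∑ j, fderiv ℝ (legendreFlux x j) t (Pi.single j 1) := by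
        rw [hp]
        refine setIntegral_congr_ae measurableSet_Icc ?_
        filter_upwards [ae_injective, ae_all_iff.2 fun i => Measure.ae_eval_ne _ i x]
          with t ht hx _
        simp [sum_fderiv_legendreFlux_apply_single ht hx]
    _ = 0 := integral_Icc_sum_fderiv_eq_zero (by intro; norm_num)
        (fun j => contDiff_legendreFlux x j)
        (fun j t h => legendreFlux_eq_zero_of_sq_eq_four (by rw [h]; norm_num))
        (fun j t h => legendreFlux_eq_zero_of_sq_eq_four (by rw [h]; norm_num))

/-- quantum curve for the Θ-Gromov–Witten wave function at
`ℏ = 1/N`: for `N ≥ 1`, the function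
`f_N(x) = ∫_{[−2,2]^N} ∏_{i<j}(t_i − t_j)² · ∏_j (x − t_j) dt`
is a polynomial function of `x` and satisfies the (rescaled) Legendre
differential equation `(4 − x²)·f_N″ − 2x·f_N′ + N(N+1)·f_N = 0`. -/
theorem legendre_ensemble_quantum_curve (N : ℕ) (hN : 1 ≤ N) (F : ℝ → ℝ)
    (hF : ∀ x : ℝ, F x =
      ∫ t in (Set.univ.pi (fun _ => Set.Icc (-2 : ℝ) 2) : Set (Fin N → ℝ)),
        (∏ i : Fin N, ∏ j ∈ Finset.Ioi i, (t i - t j) ^ 2) * ∏ j : Fin N, (x - t j)) :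
    (∃ p : Polynomial ℝ, ∀ x : ℝ, F x = p.eval x) ∧
    ∀ x : ℝ,
      (4 - x ^ 2) * deriv (deriv F) x - 2 * x * deriv F x + (N : ℝ) * ((N : ℝ) + 1) * F x
        = 0 :=
  legendre_ensemble_quantum_curve_general N F hF
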